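/- arXiv:1302.2398 — 3 statements merged into one kernel-verified Lean document; each statement's English description precedes it below -/
import Mathlib

section
/- Let p ≥ 1 be an integer and 0 ≤ α < 1. Define s₀(r) = 6(1-α)(1-r)⁴ − ∑_{k=1}^{p} r^{2(k-1)} (3(r+1)² − 3α(1-r)² + 2(k-1)(r²+3)(1-r)). Then s₀(0) = 3(1-α) > 0 and s₀(1) < 0, so by continuity s₀ has a root in the open interval (0,1). -/
open Finset

lemma sum_Icc_one_zero_pow_mul {R : Type*} [Semiring R] {m p : ℕ} (hm : m ≠ 0) (hp : 1 ≤ p)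
    (g : ℕ → R) : ∑ k ∈ Icc 1 p, (0 : R) ^ (m * (k - 1)) * g k = g 1 := by
  rw [sum_eq_single_of_mem 1 (mem_Icc.mpr ⟨le_rfl, hp⟩)]
  · simp
  · intro k hk hk1
    have hexp : m * (k - 1) ≠ 0 := mul_ne_zero hm (by have := (mem_Icc.mp hk).1; omega)
    rw [zero_pow hexp, zero_mul]

theorem s0_has_root_general (p : ℕ) (hp : 1 ≤ p) (α : ℝ) (hα1 : α < 1)
    (s₀ : ℝ → ℝ)
    (hs : ∀ r : ℝ, s₀ r = 6 * (1 - α) * (1 - r) ^ 4 -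
      ∑ k ∈ Finset.Icc 1 p, r ^ (2 * (k - 1)) *
        (3 * (r + 1) ^ 2 - 3 * α * (1 - r) ^ 2 +
          2 * ((k : ℝ) - 1) * (r ^ 2 + 3) * (1 - r))) :
    s₀ 0 = 3 * (1 - α) ∧ 0 < s₀ 0 ∧ s₀ 1 < 0 ∧
      ∃ r ∈ Set.Ioo (0 : ℝ) 1, s₀ r = 0 := by
  have hzero : s₀ 0 = 3 * (1 - α) := by
    rw [hs, sum_Icc_one_zero_pow_mul two_ne_zero hp]
    ring
  have hone : s₀ 1 = -(12 * p) := by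
    norm_num [hs, mul_comm]
  have hpos : 0 < s₀ 0 := by
    rw [hzero]
    linarith
  have hneg : s₀ 1 < 0 := by
    have : (1 : ℝ) ≤ p := by exact_mod_cast hp
    rw [hone]
    linarith
  have hcont : Continuous s₀ := by
    rw [funext hs]
    fun_prop
  obtain ⟨r, hr, hroot⟩ := intermediate_value_Ioo' zero_le_one hcont.continuousOn ⟨hneg, hpos⟩
  exact ⟨hzero, hpos, hneg, r, hr, hroot⟩

/-- The polynomial `s₀` from the radius-of-starlikeness computation satisfies
`s₀(0) = 3(1-α) > 0`, `s₀(1) < 0`, and hence has a root in `(0,1)`. -/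
theorem s0_has_root (p : ℕ) (hp : 1 ≤ p) (α : ℝ) (hα0 : 0 ≤ α) (hα1 : α < 1)
    (s₀ : ℝ → ℝ)
    (hs : ∀ r : ℝ, s₀ r = 6 * (1 - α) * (1 - r) ^ 4 -
      ∑ k ∈ Finset.Icc 1 p, r ^ (2 * (k - 1)) *
        (3 * (r + 1) ^ 2 - 3 * α * (1 - r) ^ 2 +
          2 * ((k : ℝ) - 1) * (r ^ 2 + 3) * (1 - r))) :
    s₀ 0 = 3 * (1 - α) ∧ 0 < s₀ 0 ∧ s₀ 1 < 0 ∧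
      ∃ r ∈ Set.Ioo (0 : ℝ) 1, s₀ r = 0 :=
  s0_has_root_general p hp α hα1 s₀ hs
end

section
/- Let F(z) = z − (1/6)|z|² conj(z)² on the unit disk 𝔻. Then F is injective on the unit disk and every complex number w with |w| < 1/2 lies in the image F(𝔻). -/
open Complex Metric Set Function

private lemma normSq_cast (z : ℂ) : ((‖z‖ ^ 2 : ℝ) : ℂ) = z * (starRingEnd ℂ z) := by
  rw [Complex.mul_conj]
  norm_cast
  rw [Complex.normSq_eq_norm_sq]

private lemma conj_norm_sub (a b : ℂ) :
    ‖starRingEnd ℂ a - starRingEnd ℂ b‖ = ‖a - b‖ := by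
  rw [← map_sub]
  exact RCLike.norm_conj _

private lemma diff_bound {r : ℝ} (hr : 0 ≤ r) {a b : ℂ} (ha : ‖a‖ ≤ r) (hb : ‖b‖ ≤ r) :
    ‖a * (starRingEnd ℂ a) ^ 3 - b * (starRingEnd ℂ b) ^ 3‖ ≤ 4 * r ^ 3 * ‖a - b‖ := by
  have key : a * (starRingEnd ℂ a) ^ 3 - b * (starRingEnd ℂ b) ^ 3 =
      (a - b) * (starRingEnd ℂ a) ^ 3 +
        b * (starRingEnd ℂ a - starRingEnd ℂ b) *
          ((starRingEnd ℂ a) ^ 2 + starRingEnd ℂ a * starRingEnd ℂ b +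
            (starRingEnd ℂ b) ^ 2) := by ring
  rw [key]
  have hca : ‖starRingEnd ℂ a‖ = ‖a‖ := RCLike.norm_conj _
  have hcb : ‖starRingEnd ℂ b‖ = ‖b‖ := RCLike.norm_conj _
  have h1 : ‖(a - b) * (starRingEnd ℂ a) ^ 3‖ ≤ r ^ 3 * ‖a - b‖ := by
    rw [norm_mul, norm_pow, hca, mul_comm]
    gcongr
  have h2 : ‖b * (starRingEnd ℂ a - starRingEnd ℂ b) *
      ((starRingEnd ℂ a) ^ 2 + starRingEnd ℂ a * starRingEnd ℂ b +
        (starRingEnd ℂ b) ^ 2)‖ ≤ 3 * r ^ 3 * ‖a - b‖ := by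
    have hsum : ‖(starRingEnd ℂ a) ^ 2 + starRingEnd ℂ a * starRingEnd ℂ b +
        (starRingEnd ℂ b) ^ 2‖ ≤ 3 * r ^ 2 := by
      refine (norm_add_le _ _).trans ?_
      have := norm_add_le ((starRingEnd ℂ a) ^ 2) (starRingEnd ℂ a * starRingEnd ℂ b)
      have h3 : ‖(starRingEnd ℂ a) ^ 2‖ ≤ r ^ 2 := by
        rw [norm_pow, hca]; have := norm_nonneg a; nlinarith
      have h4 : ‖starRingEnd ℂ a * starRingEnd ℂ b‖ ≤ r ^ 2 := by
        rw [norm_mul, hca, hcb]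
        have := norm_nonneg a; have := norm_nonneg b; nlinarith
      have h5 : ‖(starRingEnd ℂ b) ^ 2‖ ≤ r ^ 2 := by
        rw [norm_pow, hcb]; have := norm_nonneg b; nlinarith
      linarith
    rw [norm_mul, norm_mul, conj_norm_sub]
    have := norm_nonneg (a - b)
    have := norm_nonneg b
    have h6 : ‖b‖ * ‖a - b‖ ≤ r * ‖a - b‖ := by nlinarith
    have h7 : (0:ℝ) ≤ ‖b‖ * ‖a - b‖ := by positivity
    calc ‖b‖ * ‖a - b‖ * ‖(starRingEnd ℂ a) ^ 2 + starRingEnd ℂ a * starRingEnd ℂ b +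
          (starRingEnd ℂ b) ^ 2‖ ≤ (r * ‖a - b‖) * (3 * r ^ 2) := by
            apply mul_le_mul h6 hsum (norm_nonneg _) (by positivity)
      _ = 3 * r ^ 3 * ‖a - b‖ := by ring
  calc ‖_ + _‖ ≤ _ := norm_add_le _ _
    _ ≤ 4 * r ^ 3 * ‖a - b‖ := by linarith

/-- The biharmonic mapping `F(z) = z − (1/6)|z|² conj(z)²` is injective on the unit disk
and its range contains the disk `|w| < 1/2`. -/
theorem biharmonic_example (F : ℂ → ℂ)
    (hF : ∀ z : ℂ, F z = z - (1 / 6) * ((‖z‖ ^ 2 : ℝ) : ℂ) * (starRingEnd ℂ z) ^ 2) :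
    Set.InjOn F (Metric.ball 0 1) ∧
      ∀ w : ℂ, ‖w‖ < 1 / 2 → w ∈ F '' Metric.ball 0 1 := by
  have hF' : ∀ z : ℂ, F z = z - (1 / 6) * (z * (starRingEnd ℂ z) ^ 3) := by
    intro z
    rw [hF z, normSq_cast]
    ring
  constructor
  · -- Injectivity
    intro x hx y hy hxy
    rw [mem_ball, dist_zero_right] at hx hy
    by_contra hne
    have hd : (0:ℝ) < ‖x - y‖ := by
      rw [norm_pos_iff]; exact sub_ne_zero.mpr hne
    have heq : x - y = (1 / 6) * (x * (starRingEnd ℂ x) ^ 3 - y * (starRingEnd ℂ y) ^ 3) := by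
      have := hxy
      rw [hF' x, hF' y] at this
      linear_combination this
    set m : ℝ := max ‖x‖ ‖y‖ with hm
    have hm1 : m < 1 := max_lt hx hy
    have hm0 : 0 ≤ m := le_max_of_le_left (norm_nonneg _)
    have hb := diff_bound hm0 (le_max_left ‖x‖ ‖y‖) (le_max_right ‖x‖ ‖y‖)
    have : ‖x - y‖ ≤ (1/6) * (4 * m ^ 3 * ‖x - y‖) := by
      calc ‖x - y‖ = ‖(1 / 6 : ℂ)‖ * ‖x * (starRingEnd ℂ x) ^ 3 - y * (starRingEnd ℂ y) ^ 3‖ := by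
            rw [← norm_mul, ← heq]
        _ ≤ (1/6) * (4 * m ^ 3 * ‖x - y‖) := by
            have : ‖(1 / 6 : ℂ)‖ = 1/6 := by norm_num
            rw [this]
            linarith
    have hm3 : m ^ 3 < 1 := pow_lt_one₀ hm0 hm1 (by norm_num)
    nlinarith
  · -- Range contains disk of radius 1/2
    intro w hw
    set g : ℂ → ℂ := fun z => w + (1 / 6) * (z * (starRingEnd ℂ z) ^ 3) with hg
    set s : Set ℂ := Metric.closedBall (0:ℂ) (9/10) with hs
    have hsc : IsComplete s := Metric.isClosed_closedBall.isComplete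
    have hsf : MapsTo g s s := by
      intro z hz
      rw [hs, mem_closedBall, dist_zero_right] at hz ⊢
      have hz0 : (0:ℝ) ≤ ‖z‖ := norm_nonneg z
      calc ‖g z‖ ≤ ‖w‖ + ‖(1 / 6 : ℂ) * (z * (starRingEnd ℂ z) ^ 3)‖ := norm_add_le _ _
        _ ≤ 9/10 := by
            rw [norm_mul, norm_mul, norm_pow, RCLike.norm_conj]
            have h16 : ‖(1 / 6 : ℂ)‖ = 1/6 := by norm_num
            rw [h16]
            have h4 : ‖z‖ ^ 4 ≤ (9/10 : ℝ) ^ 4 := pow_le_pow_left₀ hz0 hz 4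
            nlinarith
    have hlip : LipschitzOnWith (486/1000 : NNReal) g s := by
      apply LipschitzOnWith.of_dist_le_mul
      intro x hx y hy
      rw [hs, mem_closedBall, dist_zero_right] at hx hy
      rw [dist_eq_norm, dist_eq_norm]
      have : g x - g y = (1/6 : ℂ) * (x * (starRingEnd ℂ x) ^ 3 - y * (starRingEnd ℂ y) ^ 3) := by
        rw [hg]; ring
      rw [this, norm_mul]
      have h16 : ‖(1 / 6 : ℂ)‖ = 1/6 := by norm_num
      rw [h16]
      have hb := diff_bound (by norm_num : (0:ℝ) ≤ 9/10) hx hy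
      have hc : ((486/1000 : NNReal) : ℝ) = 486/1000 := by norm_num
      rw [hc]
      nlinarith [norm_nonneg (x - y)]
    have hcw : ContractingWith (486/1000 : NNReal) (hsf.restrict g s s) := by
      constructor
      · rw [← NNReal.coe_lt_coe]; norm_num
      · exact hlip.mapsToRestrict hsf
    have h0s : (0:ℂ) ∈ s := by
      rw [hs, mem_closedBall, dist_self]; norm_num
    obtain ⟨y, hys, hfix, -, -⟩ :=
      hcw.exists_fixedPoint' hsc hsf h0s (edist_ne_top _ _)
    refine ⟨y, ?_, ?_⟩
    · rw [mem_ball, dist_zero_right]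
      rw [hs, mem_closedBall, dist_zero_right] at hys
      linarith
    · have : g y = y := hfix
      rw [hg] at this
      rw [hF' y]
      simp only at this
      linear_combination -this
end

section
/- Let F be a polyharmonic mapping on the unit disk of the form F(z) = ∑_{k=1}^p |z|^{2(k-1)} ∑_{j=1}^∞ (a_{k,j} z^j + conj(b_{k,j}) conj(z)^j) with a_{1,1}=1, b_{1,1}=0, a_{k,1}=b_{k,1}=0 for k≥2, and suppose ∑_{k=1}^{p} ∑_{j=1}^{∞} (2(k-1)+j²)(|a_{k,j}|+|b_{k,j}|) ≤ 2. Then for every 0 < r < 1, the harmonic map F_r(z) = z + ∑_{j=2}^∞ (∑_{k=1}^p a_{k,j} r^{2(k-1)}) z^j + ∑_{j=2}^∞ conj(∑_{k=1}^p b_{k,j} r^{2(k-1)}) conj(z)^j satisfies ∑_{j=2}^∞ j² |∑_{k=1}^p r^{2(k-1)} a_{k,j}| + ∑_{j=2}^∞ j² |∑_{k=1}^p r^{2(k-1)} b_{k,j}| ≤ 1. -/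
/-!
For `r ≤ 1` the weights `r^{2(k-1)}` have modulus at most one, so the `j`-th coefficient of
`F_r` is bounded by `∑_k |a_{k,j}|`, and `j² ≤ 2(k-1) + j²`. Hence the `HC⁰` sum of `F_r` is
dominated by the `HC_p^0` sum with its `j = 1` column removed; that column contributes at
least `|a_{1,1}| = 1`, which leaves at most `2 - 1`.
-/

open Finset

theorem tsum_add_tsum_le_sum_tsum_of_le {ι β : Type*} {s : Finset ι} {f g : β → ℝ}
    {T : ι → β → ℝ} (hf : ∀ j, 0 ≤ f j) (hg : ∀ j, 0 ≤ g j)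
    (hT : ∀ i ∈ s, Summable (T i)) (hle : ∀ j, f j + g j ≤ ∑ i ∈ s, T i j) :
    ∑' j, f j + ∑' j, g j ≤ ∑ i ∈ s, ∑' j, T i j := by
  have hsum : Summable fun j => ∑ i ∈ s, T i j := summable_sum hT
  have hfs : Summable f := hsum.of_nonneg_of_le hf fun j => by linarith [hg j, hle j]
  have hgs : Summable g := hsum.of_nonneg_of_le hg fun j => by linarith [hf j, hle j]
  rw [← hfs.tsum_add hgs, ← Summable.tsum_finsetSum hT]
  exact (hfs.add hgs).tsum_le_tsum hle hsum

theorem norm_sum_mul_le_sum_norm {ι R : Type*} [SeminormedRing R] (s : Finset ι)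
    (w x : ι → R) (hw : ∀ i ∈ s, ‖w i‖ ≤ 1) :
    ‖∑ i ∈ s, w i * x i‖ ≤ ∑ i ∈ s, ‖x i‖ :=
  (norm_sum_le _ _).trans <| sum_le_sum fun i hi =>
    (norm_mul_le _ _).trans <| mul_le_of_le_one_left (norm_nonneg _) (hw i hi)

section RadialSlice

variable (p : ℕ) (a b : ℕ → ℕ → ℂ)

/-- The `(k, j + 1)` term of the `HC_p^0` coefficient sum (the index `j` is shifted by one). -/
noncomputable def hcTerm (k j : ℕ) : ℝ :=
  (2 * ((k : ℝ) - 1) + ((j : ℝ) + 1) ^ 2) * (‖a k (j + 1)‖ + ‖b k (j + 1)‖)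

noncomputable def radialCoeff (r : ℝ) (c : ℕ → ℕ → ℂ) (j : ℕ) : ℂ :=
  ∑ k ∈ Icc 1 p, ((r ^ (2 * (k - 1)) : ℝ) : ℂ) * c k j

variable {p}

theorem norm_radialCoeff_le {r : ℝ} (hr0 : 0 ≤ r) (hr1 : r ≤ 1) (c : ℕ → ℕ → ℂ) (j : ℕ) :
    ‖radialCoeff p r c j‖ ≤ ∑ k ∈ Icc 1 p, ‖c k j‖ :=
  norm_sum_mul_le_sum_norm _ _ _ fun k _ => by
    rw [Complex.norm_real, Real.norm_of_nonneg (by positivity)]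
    exact pow_le_one₀ hr0 hr1

theorem sq_mul_norm_radialCoeff_add_le_sum_hcTerm {r : ℝ} (hr0 : 0 ≤ r) (hr1 : r ≤ 1)
    (j : ℕ) :
    ((j : ℝ) + 2) ^ 2 * ‖radialCoeff p r a (j + 2)‖
        + ((j : ℝ) + 2) ^ 2 * ‖radialCoeff p r b (j + 2)‖
      ≤ ∑ k ∈ Icc 1 p, hcTerm a b k (j + 1) := by
  calc ((j : ℝ) + 2) ^ 2 * ‖radialCoeff p r a (j + 2)‖
        + ((j : ℝ) + 2) ^ 2 * ‖radialCoeff p r b (j + 2)‖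
      ≤ ∑ k ∈ Icc 1 p, ((j : ℝ) + 2) ^ 2 * (‖a k (j + 2)‖ + ‖b k (j + 2)‖) := by
        rw [← mul_add, ← mul_sum, sum_add_distrib]
        gcongr
        exacts [norm_radialCoeff_le hr0 hr1 a _, norm_radialCoeff_le hr0 hr1 b _]
    _ ≤ ∑ k ∈ Icc 1 p, hcTerm a b k (j + 1) := by
        gcongr with k hk
        have hk : (1 : ℝ) ≤ k := by exact_mod_cast (mem_Icc.mp hk).1
        unfold hcTerm
        push_cast
        gcongr
        linarith

theorem one_le_sum_hcTerm_zero (hp : 1 ≤ p) (ha11 : a 1 1 = 1) :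
    1 ≤ ∑ k ∈ Icc 1 p, hcTerm a b k 0 := by
  have hnonneg : ∀ k ∈ Icc 1 p, 0 ≤ hcTerm a b k 0 := fun k hk => by
    have hk : (1 : ℝ) ≤ k := by exact_mod_cast (mem_Icc.mp hk).1
    unfold hcTerm
    have : 0 ≤ 2 * ((k : ℝ) - 1) := by linarith
    positivity
  calc (1 : ℝ) ≤ hcTerm a b 1 0 := by simp [hcTerm, ha11]
    _ ≤ ∑ k ∈ Icc 1 p, hcTerm a b k 0 :=
        single_le_sum hnonneg (mem_Icc.mpr ⟨le_rfl, hp⟩)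

end RadialSlice

theorem radial_slice_HC0_general (p : ℕ) (hp : 1 ≤ p) (a b : ℕ → ℕ → ℂ)
    (ha11 : a 1 1 = 1)
    (hsummable : ∀ k ∈ Finset.Icc 1 p, Summable (fun j : ℕ =>
      (2 * ((k : ℝ) - 1) + ((j : ℝ) + 1) ^ 2) * (‖a k (j + 1)‖ + ‖b k (j + 1)‖)))
    (hHC : ∑ k ∈ Finset.Icc 1 p, ∑' j : ℕ,
      (2 * ((k : ℝ) - 1) + ((j : ℝ) + 1) ^ 2) * (‖a k (j + 1)‖ + ‖b k (j + 1)‖) ≤ 2) :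
    ∀ r : ℝ, 0 < r → r < 1 →
      (∑' j : ℕ, ((j : ℝ) + 2) ^ 2 *
          ‖∑ k ∈ Finset.Icc 1 p, ((r ^ (2 * (k - 1)) : ℝ) : ℂ) * a k (j + 2)‖)
        + (∑' j : ℕ, ((j : ℝ) + 2) ^ 2 *
          ‖∑ k ∈ Finset.Icc 1 p, ((r ^ (2 * (k - 1)) : ℝ) : ℂ) * b k (j + 2)‖) ≤ 1 := by
  intro r hr0 hr1
  have hrow : ∀ k ∈ Icc 1 p, Summable (hcTerm a b k) := hsummable
  have hsplit : ∑ k ∈ Icc 1 p, ∑' j, hcTerm a b k j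
      = ∑ k ∈ Icc 1 p, hcTerm a b k 0 + ∑ k ∈ Icc 1 p, ∑' j, hcTerm a b k (j + 1) := by
    rw [← sum_add_distrib]
    exact sum_congr rfl fun k hk => (hrow k hk).tsum_eq_zero_add
  calc _ ≤ ∑ k ∈ Icc 1 p, ∑' j, hcTerm a b k (j + 1) :=
        tsum_add_tsum_le_sum_tsum_of_le (fun _ => by positivity) (fun _ => by positivity)
          (fun k hk => (summable_nat_add_iff 1).mpr (hrow k hk))
          (sq_mul_norm_radialCoeff_add_le_sum_hcTerm a b hr0.le hr1.le)
    _ ≤ 1 := by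
        have : ∑ k ∈ Icc 1 p, ∑' j, hcTerm a b k j ≤ 2 := hHC
        linarith [one_le_sum_hcTerm_zero a b hp ha11]

/-- Coefficient reduction in the disk-covering theorem: if the coefficients of a
polyharmonic mapping satisfy the `HC_p^0` condition
`∑_{k=1}^p ∑_{j=1}^∞ (2(k-1)+j²)(|a_{k,j}|+|b_{k,j}|) ≤ 2` (with `a_{1,1}=1`,
`b_{1,1}=0`, `a_{k,1}=b_{k,1}=0` for `k ≥ 2`), then for every `0 < r < 1` the radial
slice `F_r` satisfies the harmonic `HC⁰` condition
`∑_{j=2}^∞ j²(|∑_k r^{2(k-1)} a_{k,j}| + |∑_k r^{2(k-1)} b_{k,j}|) ≤ 1`. -/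
theorem radial_slice_HC0 (p : ℕ) (hp : 1 ≤ p) (a b : ℕ → ℕ → ℂ)
    (ha11 : a 1 1 = 1) (hb11 : b 1 1 = 0)
    (hak1 : ∀ k, 2 ≤ k → k ≤ p → a k 1 = 0)
    (hbk1 : ∀ k, 2 ≤ k → k ≤ p → b k 1 = 0)
    (hsummable : ∀ k ∈ Finset.Icc 1 p, Summable (fun j : ℕ =>
      (2 * ((k : ℝ) - 1) + ((j : ℝ) + 1) ^ 2) * (‖a k (j + 1)‖ + ‖b k (j + 1)‖)))
    (hHC : ∑ k ∈ Finset.Icc 1 p, ∑' j : ℕ,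
      (2 * ((k : ℝ) - 1) + ((j : ℝ) + 1) ^ 2) * (‖a k (j + 1)‖ + ‖b k (j + 1)‖) ≤ 2) :
    ∀ r : ℝ, 0 < r → r < 1 →
      (∑' j : ℕ, ((j : ℝ) + 2) ^ 2 *
          ‖∑ k ∈ Finset.Icc 1 p, ((r ^ (2 * (k - 1)) : ℝ) : ℂ) * a k (j + 2)‖)
        + (∑' j : ℕ, ((j : ℝ) + 2) ^ 2 *
          ‖∑ k ∈ Finset.Icc 1 p, ((r ^ (2 * (k - 1)) : ℝ) : ℂ) * b k (j + 2)‖) ≤ 1 :=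
  radial_slice_HC0_general p hp a b ha11 hsummable hHC
end
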